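/- For integers k ≥ 0 and n ≥ k+1, the number op_{n,k}^{k+1} of ordered preference sets of length n with exactly k flaws and leading term k+1 satisfies (n+1) · op_{n,k}^{k+1} = (k+2) · C(2n−k−1, n−k−1). -/

import Mathlib

/-!
On a nondecreasing preference list the spaces occupied at or above the current preference
always form an interval, so parking only has to track the next candidate space. A list with
leading term `k + 1` never uses the spaces `1, …, k`, so it has exactly `k` flaws iff the
spaces `k + 1, …, n` all fill up, i.e. iff its `i`-th entry (from `0`) is at most `k + 1 + i`.
Counting nondecreasing lists under such a staircase is a ballot problem: enumerating by the
first entry and telescoping with Pascal's rule gives `C(2n-k-1, n) - C(2n-k-1, n+1)`, which is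
`(k + 2) / (n + 1) · C(2n-k-1, n-k-1)`.
-/

/-- The first unoccupied parking space `j` with `p ≤ j ≤ n`, if any. -/
def firstFree (n : ℕ) (occ : Finset ℕ) (p : ℕ) : Option ℕ :=
  (List.range' p (n + 1 - p)).find? (fun j => decide (j ∉ occ))

/-- Number of cars that fail to park, processing the preference list in order,
given the set of already occupied spaces. -/
def flawsFrom (n : ℕ) : List ℕ → Finset ℕ → ℕ
  | [], _ => 0
  | p :: rest, occ =>
    match firstFree n occ p with
    | none => flawsFrom n rest occ + 1
    | some j => flawsFrom n rest (insert j occ)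

/-- The number of flaws (unparked cars) of a preference list of length `n`. -/
def flaws (n : ℕ) (a : List ℕ) : ℕ := flawsFrom n a ∅

/-- A preference set of length `n`: a list of length `n` with entries in `{1, …, n}`. -/
def IsPrefSet (n : ℕ) (a : List ℕ) : Prop :=
  a.length = n ∧ ∀ x ∈ a, 1 ≤ x ∧ x ≤ n

/-- An ordered preference set of length `n`: a nondecreasing preference set. -/
def IsOrderedPrefSet (n : ℕ) (a : List ℕ) : Prop :=
  IsPrefSet n a ∧ a.Pairwise (· ≤ ·)

/-- `op_{n,≥k}`: number of ordered preference sets of length `n` with at least `k` flaws. -/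
noncomputable def opGe (n k : ℕ) : ℕ :=
  {a : List ℕ | IsOrderedPrefSet n a ∧ k ≤ flaws n a}.ncard

/-- `op_{n,≤k}`: number of ordered preference sets of length `n` with at most `k` flaws. -/
noncomputable def opLe (n k : ℕ) : ℕ :=
  {a : List ℕ | IsOrderedPrefSet n a ∧ flaws n a ≤ k}.ncard

/-- `op_{n,k}`: number of ordered preference sets of length `n` with exactly `k` flaws. -/
noncomputable def opEq (n k : ℕ) : ℕ :=
  {a : List ℕ | IsOrderedPrefSet n a ∧ flaws n a = k}.ncard

/-- `op_{n,≥k,≤l}`: at least `k` flaws, every entry at most `l`. -/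
noncomputable def opGeLe (n k l : ℕ) : ℕ :=
  {a : List ℕ | IsOrderedPrefSet n a ∧ k ≤ flaws n a ∧ ∀ x ∈ a, x ≤ l}.ncard

/-- `op_{n,≥k,≤l}^m`: at least `k` flaws, every entry at most `l`, leading term `m`. -/
noncomputable def opGeLeLead (n k l m : ℕ) : ℕ :=
  {a : List ℕ | IsOrderedPrefSet n a ∧ k ≤ flaws n a ∧ (∀ x ∈ a, x ≤ l) ∧
    a.head? = some m}.ncard

/-- `op_{n,k,≤l}^m`: exactly `k` flaws, every entry at most `l`, leading term `m`. -/
noncomputable def opEqLeLead (n k l m : ℕ) : ℕ :=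
  {a : List ℕ | IsOrderedPrefSet n a ∧ flaws n a = k ∧ (∀ x ∈ a, x ≤ l) ∧
    a.head? = some m}.ncard

/-- `op_{n,k}^m`: exactly `k` flaws, leading term `m`. -/
noncomputable def opLead (n k m : ℕ) : ℕ :=
  {a : List ℕ | IsOrderedPrefSet n a ∧ flaws n a = k ∧ a.head? = some m}.ncard

/-- `op_{n,k,=l}^m`: exactly `k` flaws, maximal entry exactly `l`, leading term `m`. -/
noncomputable def opMaxLead (n k l m : ℕ) : ℕ :=
  {a : List ℕ | IsOrderedPrefSet n a ∧ flaws n a = k ∧ (∀ x ∈ a, x ≤ l) ∧ l ∈ a ∧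
    a.head? = some m}.ncard

/-- Binomial coefficient `C(a, b)` with an integer lower index, which is `0`
when `b < 0` (the standard convention). -/
def chooseInt (a : ℕ) (b : ℤ) : ℕ := if 0 ≤ b then a.choose b.toNat else 0

/-- Flaws of a nondecreasing list, when a space at or above the current preference is
occupied exactly if it lies below `q`. -/
def sortedFlaws (n : ℕ) : List ℕ → ℕ → ℕ
  | [], _ => 0
  | a :: rest, q =>
    if max a q ≤ n then sortedFlaws n rest (max a q + 1) else sortedFlaws n rest q + 1

section Parking

variable {n : ℕ}

lemma find?_range'_not_mem {occ : Finset ℕ} {q : ℕ} :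
    ∀ {m p : ℕ}, (∀ j, p ≤ j → (j ∈ occ ↔ j < q)) →
      (List.range' p m).find? (fun j => decide (j ∉ occ)) =
        if max p q < p + m then some (max p q) else none
  | 0, p, _ => by simp
  | m + 1, p, h => by
    rw [List.range'_succ]
    by_cases hpq : q ≤ p
    · have hp : p ∉ occ := fun hp => by have := (h p le_rfl).mp hp; omega
      rw [List.find?_cons_of_pos (by simpa using hp), max_eq_left hpq, if_pos (by omega)]
    · have hp : p ∈ occ := (h p le_rfl).mpr (by omega)
      rw [List.find?_cons_of_neg (by simpa using hp),
        find?_range'_not_mem fun j hj => h j (by omega)]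
      simp only [show max (p + 1) q = max p q by omega, show p + 1 + m = p + (m + 1) by omega]

lemma firstFree_eq_of_occupied_iff {occ : Finset ℕ} {a q : ℕ}
    (h : ∀ j, a ≤ j → (j ∈ occ ↔ j < q)) :
    firstFree n occ a = if max a q ≤ n then some (max a q) else none := by
  rw [firstFree, find?_range'_not_mem h]
  exact if_congr (by omega) rfl rfl

lemma flawsFrom_eq_sortedFlaws :
    ∀ {l : List ℕ} {occ : Finset ℕ} {q : ℕ}, l.Pairwise (· ≤ ·) →
      (∀ x ∈ l, ∀ j, x ≤ j → (j ∈ occ ↔ j < q)) →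
        flawsFrom n l occ = sortedFlaws n l q
  | [], _, _, _, _ => rfl
  | a :: rest, occ, q, hs, hocc => by
    obtain ⟨ha_le, hs⟩ := List.pairwise_cons.mp hs
    have hocc_rest : ∀ x ∈ rest, ∀ j, x ≤ j → (j ∈ occ ↔ j < q) :=
      fun x hx => hocc x (List.mem_cons_of_mem a hx)
    rw [flawsFrom, firstFree_eq_of_occupied_iff (hocc a List.mem_cons_self), sortedFlaws]
    split_ifs with hc
    · refine flawsFrom_eq_sortedFlaws hs fun x hx j hj => ?_
      have := ha_le x hx
      rw [Finset.mem_insert, hocc_rest x hx j hj]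
      omega
    · exact congrArg (· + 1) (flawsFrom_eq_sortedFlaws hs hocc_rest)

lemma flaws_eq_sortedFlaws {a : List ℕ} {q : ℕ} (hs : a.Pairwise (· ≤ ·))
    (hq : ∀ x ∈ a, q ≤ x) : flaws n a = sortedFlaws n a q :=
  flawsFrom_eq_sortedFlaws hs fun x hx j hj => by
    simpa using (hq x hx).trans hj

lemma sortedFlaws_of_lt {q : ℕ} (hq : n < q) : ∀ l : List ℕ, sortedFlaws n l q = l.length
  | [] => rfl
  | a :: rest => by
    rw [sortedFlaws, if_neg (by omega), sortedFlaws_of_lt hq rest, List.length_cons]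

lemma sortedFlaws_eq_of_forall_getElem_le :
    ∀ {l : List ℕ} {q : ℕ}, (∀ i (hi : i < l.length), l[i] ≤ q + i) →
      sortedFlaws n l q = l.length - (n + 1 - q)
  | [], _, _ => by simp [sortedFlaws]
  | a :: rest, q, h => by
    have ha : a ≤ q := by have := h 0 (by simp); simpa using this
    by_cases hq : q ≤ n
    · have hrest : ∀ i (hi : i < rest.length), rest[i] ≤ q + 1 + i := fun i hi => by
        have := h (i + 1) (by simpa using hi)
        simpa [Nat.add_right_comm, Nat.add_assoc] using this
      rw [sortedFlaws, max_eq_right ha, if_pos hq, sortedFlaws_eq_of_forall_getElem_le hrest,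
        List.length_cons]
      omega
    · rw [sortedFlaws_of_lt (by omega)]
      omega

/-- Cars whose preferences are all at least `p` can only use the spaces `max q p, …, n`. -/
lemma length_le_sortedFlaws_add {p : ℕ} :
    ∀ {l : List ℕ} {q : ℕ}, (∀ x ∈ l, p ≤ x) →
      l.length ≤ sortedFlaws n l q + (n + 1 - max q p)
  | [], _, _ => by simp
  | a :: rest, q, h => by
    have ha := h a List.mem_cons_self
    have hrest : ∀ x ∈ rest, p ≤ x := fun x hx => h x (List.mem_cons_of_mem a hx)
    rw [sortedFlaws, List.length_cons]
    split_ifs with hc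
    · have := length_le_sortedFlaws_add (q := max a q + 1) hrest
      omega
    · have := length_le_sortedFlaws_add (q := q) hrest
      omega

lemma length_le_sortedFlaws_add_of_lt_getElem :
    ∀ {l : List ℕ} {q i : ℕ} (hi : i < l.length), l.Pairwise (· ≤ ·) → q + i < l[i] →
      l[i] ≤ n → l.length ≤ sortedFlaws n l q + (n - q)
  | a :: rest, q, i, hi, hs, hgt, hle => by
    obtain ⟨ha_le, hs⟩ := List.pairwise_cons.mp hs
    by_cases haq : q < a
    · have := length_le_sortedFlaws_add (n := n) (q := q)
        (List.forall_mem_cons.mpr ⟨le_rfl, ha_le⟩)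
      omega
    obtain _ | i := i
    · exact absurd (by simpa using hgt) haq
    have hi : i < rest.length := by simpa using hi
    have hgt : q + i + 1 < rest[i] := by simpa [Nat.add_assoc] using hgt
    have hle : rest[i] ≤ n := by simpa using hle
    rw [sortedFlaws, List.length_cons, max_eq_right (by omega)]
    split_ifs with hq
    · have := length_le_sortedFlaws_add_of_lt_getElem (q := q + 1) hi hs (by omega) hle
      omega
    · have := length_le_sortedFlaws_add_of_lt_getElem (q := q) hi hs (by omega) hle
      omega

end Parking

lemma flaws_eq_iff_forall_getElem_le {n k : ℕ} {a : List ℕ} (hk : k + 1 ≤ n)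
    (hlen : a.length = n) (hs : a.Pairwise (· ≤ ·)) (hlow : ∀ x ∈ a, k + 1 ≤ x)
    (hup : ∀ x ∈ a, x ≤ n) :
    flaws n a = k ↔ ∀ i (hi : i < a.length), a[i] ≤ k + 1 + i := by
  rw [flaws_eq_sortedFlaws hs hlow]
  constructor
  · intro hflaws i hi
    by_contra! hgt
    have := length_le_sortedFlaws_add_of_lt_getElem hi hs hgt (hup _ (List.getElem_mem hi))
    omega
  · intro h
    rw [sortedFlaws_eq_of_forall_getElem_le h]
    omega

lemma List.forall_getElem_cons_le_iff {v : ℕ} {t : List ℕ} {f : ℕ → ℕ} :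
    (∀ i (hi : i < (v :: t).length), (v :: t)[i] ≤ f i) ↔
      v ≤ f 0 ∧ ∀ i (hi : i < t.length), t[i] ≤ f (i + 1) := by
  constructor
  · intro h
    refine ⟨by have := h 0 (by simp); simpa using this, fun i hi => ?_⟩
    have := h (i + 1) (by simpa using hi)
    simpa using this
  · rintro ⟨h0, ht⟩ (_ | i) hi
    · simpa using h0
    · simpa using ht i (by simpa using hi)

def staircaseLists (n : ℕ) : ℕ → ℕ → ℕ → Finset (List ℕ)
  | 0, _, _ => {[]}
  | L + 1, lo, q =>
    (Finset.Icc lo (min q n)).biUnion fun v => (staircaseLists n L v (q + 1)).image (List.cons v)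

section Staircase

variable {n : ℕ}

lemma mem_staircaseLists :
    ∀ {L lo q : ℕ} {l : List ℕ}, l ∈ staircaseLists n L lo q ↔
      l.length = L ∧ l.Pairwise (· ≤ ·) ∧ (∀ x ∈ l, lo ≤ x) ∧
        ∀ i (hi : i < l.length), l[i] ≤ min (q + i) n
  | 0, lo, q, l => by
    simp only [staircaseLists, Finset.mem_singleton, List.length_eq_zero_iff]
    constructor
    · rintro rfl
      simp
    · exact fun h => h.1
  | L + 1, lo, q, [] => by simp [staircaseLists]
  | L + 1, lo, q, v :: t => by
    simp only [List.forall_getElem_cons_le_iff]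
    simp only [staircaseLists, Finset.mem_biUnion, Finset.mem_image, Finset.mem_Icc,
      List.cons.injEq, List.length_cons, List.pairwise_cons, List.forall_mem_cons,
      mem_staircaseLists, Nat.add_right_cancel_iff, Nat.add_zero, Nat.add_right_comm q]
    constructor
    · rintro ⟨v, ⟨hlo, hv⟩, t, ⟨hlen, hs, hlow, hcap⟩, rfl, rfl⟩
      exact ⟨hlen, ⟨hlow, hs⟩, ⟨hlo, fun x hx => hlo.trans (hlow x hx)⟩, hv, hcap⟩
    · rintro ⟨hlen, ⟨hlow, hs⟩, ⟨hlo, -⟩, hv, hcap⟩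
      exact ⟨v, ⟨hlo, hv⟩, t, ⟨hlen, hs, hlow, hcap⟩, rfl, rfl⟩

lemma card_staircaseLists_succ (L lo q : ℕ) :
    (staircaseLists n (L + 1) lo q).card =
      ∑ v ∈ Finset.Icc lo (min q n), (staircaseLists n L v (q + 1)).card := by
  rw [staircaseLists, Finset.card_biUnion]
  · exact Finset.sum_congr rfl fun v _ => Finset.card_image_of_injective _ List.cons_injective
  · intro v _ w _ hvw
    simp only [Function.onFun, Finset.disjoint_left, Finset.mem_image]
    rintro _ ⟨s, -, rfl⟩ ⟨t, -, hts⟩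
    exact hvw (List.cons.inj hts).1.symm

lemma sum_Ico_add_eq_of_eq_add {f t : ℕ → ℕ} {lo hi : ℕ} (hle : lo ≤ hi)
    (h : ∀ v, lo ≤ v → v < hi → f v = t v + f (v + 1)) :
    ∑ v ∈ Finset.Ico lo hi, t v + f hi = f lo := by
  induction hi, hle using Nat.le_induction with
  | base => simp
  | succ m hm ih =>
    rw [Finset.sum_Ico_succ_top hm, Nat.add_assoc, ← h m hm (by omega)]
    exact ih fun v hv hvm => h v hv (by omega)

/-- The ballot formula `C(L + n - lo, L) - C(L + n - lo, L + q + 1 - lo)`, stated additively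
so that the induction never meets a truncated subtraction. -/
theorem card_staircaseLists_add_choose :
    ∀ {L lo q : ℕ}, lo ≤ n → lo ≤ q → n ≤ L + q →
      (staircaseLists n L lo q).card + (L + n - lo).choose (L + q + 1 - lo) =
        (L + n - lo).choose L
  | 0, lo, q, _, _, hq => by
    simp [staircaseLists, Nat.choose_eq_zero_of_lt (show n - lo < q + 1 - lo by omega)]
  | L + 1, lo, q, hlo, hloq, hq => by
    rw [card_staircaseLists_succ, show L + 1 + q + 1 - lo = L + q + 2 - lo by omega]
    set V := min q n
    have hterm : ∀ v ∈ Finset.Icc lo V, (staircaseLists n L v (q + 1)).card +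
        (L + n - v).choose (L + q + 2 - v) = (L + n - v).choose L := fun v hv => by
      rw [Finset.mem_Icc] at hv
      exact card_staircaseLists_add_choose (by omega) (by omega) (by omega)
    have hG := sum_Ico_add_eq_of_eq_add (f := fun v => (L + 1 + n - v).choose (L + 1))
      (t := fun v => (L + n - v).choose L) (show lo ≤ V + 1 by omega) fun v _ hv => by
        rw [show L + 1 + n - v = L + n - v + 1 by omega,
          show L + 1 + n - (v + 1) = L + n - v by omega, Nat.choose_succ_succ']
    have hF := sum_Ico_add_eq_of_eq_add (f := fun v => (L + 1 + n - v).choose (L + q + 2 - v))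
      (t := fun v => (L + n - v).choose (L + q + 2 - v)) (show lo ≤ V + 1 by omega)
      fun v _ hv => by
        rw [show L + 1 + n - (v + 1) = L + n - v by omega,
          show L + q + 2 - (v + 1) = L + q + 1 - v by omega,
          show L + 1 + n - v = L + n - v + 1 by omega,
          show L + q + 2 - v = L + q + 1 - v + 1 by omega, Nat.choose_succ_succ', Nat.add_comm]
    have hboundary : (L + 1 + n - (V + 1)).choose (L + 1) =
        (L + 1 + n - (V + 1)).choose (L + q + 2 - (V + 1)) := by
      rcases le_total q n with hqn | hnq
      · rw [show V = q by omega, show L + q + 2 - (q + 1) = L + 1 by omega]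
      · rw [show V = n by omega, Nat.choose_eq_zero_of_lt (by omega),
          Nat.choose_eq_zero_of_lt (by omega)]
    have hsum := Finset.sum_add_distrib.symm.trans (Finset.sum_congr rfl hterm)
    rw [Finset.Ico_add_one_right_eq_Icc] at hG hF
    omega

end Staircase

lemma Nat.succ_mul_choose_sub_choose_succ (N n : ℕ) :
    (n + 1) * (N.choose n - N.choose (n + 1)) = (2 * n + 1 - N) * N.choose n := by
  rcases lt_or_ge N n with hN | hN
  · simp [Nat.choose_eq_zero_of_lt hN]
  rw [Nat.mul_sub, Nat.mul_comm (n + 1) (N.choose (n + 1)), Nat.choose_succ_right_eq,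
    Nat.mul_comm, ← Nat.mul_sub, Nat.mul_comm]
  congr 1
  omega

lemma List.forall_le_of_head?_eq {a : List ℕ} {m : ℕ} (hs : a.Pairwise (· ≤ ·))
    (hhead : a.head? = some m) : ∀ x ∈ a, m ≤ x := by
  obtain _ | ⟨v, t⟩ := a
  · simp at hhead
  · obtain rfl : v = m := by simpa using hhead
    exact List.forall_mem_cons.mpr ⟨le_rfl, (List.pairwise_cons.mp hs).1⟩

lemma opLead_eq_card_staircaseLists {n k : ℕ} (hk : k + 1 ≤ n) :
    opLead n k (k + 1) = (staircaseLists n n (k + 1) (k + 1)).card := by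
  rw [opLead, ← Set.ncard_coe_finset]
  congr 1
  ext a
  simp only [Set.mem_ofPred_eq, Finset.mem_coe, mem_staircaseLists, IsOrderedPrefSet, IsPrefSet]
  constructor
  · rintro ⟨⟨⟨hlen, hmem⟩, hs⟩, hflaws, hhead⟩
    have hlow := List.forall_le_of_head?_eq hs hhead
    have hcap := (flaws_eq_iff_forall_getElem_le hk hlen hs hlow
      fun x hx => (hmem x hx).2).mp hflaws
    exact ⟨hlen, hs, hlow, fun i hi => le_min (hcap i hi) (hmem _ (List.getElem_mem hi)).2⟩
  · rintro ⟨hlen, hs, hlow, hcap⟩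
    have hup : ∀ x ∈ a, x ≤ n := fun x hx => by
      obtain ⟨i, hi, rfl⟩ := List.mem_iff_getElem.mp hx
      exact (hcap i hi).trans (min_le_right _ _)
    have hne : 0 < a.length := by omega
    refine ⟨⟨⟨hlen, fun x hx => ⟨by have := hlow x hx; omega, hup x hx⟩⟩, hs⟩,
      (flaws_eq_iff_forall_getElem_le hk hlen hs hlow hup).mpr
        fun i hi => (hcap i hi).trans (min_le_left _ _), ?_⟩
    have := hcap 0 hne
    have := hlow _ (List.getElem_mem hne)
    rw [List.head?_eq_getElem?, List.getElem?_eq_getElem hne]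
    congr 1
    omega

theorem stmt10 (n k : ℕ) (hn : k + 1 ≤ n) :
    (n + 1) * opLead n k (k + 1) = (k + 2) * Nat.choose (2 * n - k - 1) (n - k - 1) := by
  have hcount := card_staircaseLists_add_choose (L := n) hn le_rfl (by omega)
  rw [show n + n - (k + 1) = 2 * n - k - 1 by omega,
    show n + (k + 1) + 1 - (k + 1) = n + 1 by omega] at hcount
  rw [opLead_eq_card_staircaseLists hn, Nat.eq_sub_of_add_eq hcount,
    Nat.succ_mul_choose_sub_choose_succ,
    Nat.choose_symm_of_eq_add (show 2 * n - k - 1 = n - k - 1 + n by omega)]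
  congr 1
  omega
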